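/- arXiv:2409.03867 — 2 statements merged into one kernel-verified Lean document; each statement's English description precedes it below -/
import Mathlib

section
/- For every real number p ≥ 2 and all real numbers a, b, one has |b|^p − |a|^p ≥ p·|a|^{p−2}·a·(b − a) + 2^{1−p}·|a − b|^p, where |a|^{p−2}·a is interpreted as 0 when a = 0. -/
open Real Set

/-- Superadditivity of `x ↦ x ^ z` on nonnegative reals for `z ≥ 1`. -/
lemma aux_superadd {u v z : ℝ} (hu : 0 ≤ u) (hv : 0 ≤ v) (hz : 1 ≤ z) :
    u ^ z + v ^ z ≤ (u + v) ^ z := by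
  rcases eq_or_lt_of_le (add_nonneg hu hv) with h | h
  · have hu0 : u = 0 := by linarith
    have hv0 : v = 0 := by linarith
    simp [hu0, hv0, Real.zero_rpow (by linarith : z ≠ 0)]
  · have h1 : (u + v) ^ z = (u + v) ^ (z - 1) * (u + v) := by
      rw [← Real.rpow_add_one h.ne' (z - 1)]; norm_num
    have h2 : u ^ (z - 1) ≤ (u + v) ^ (z - 1) :=
      Real.rpow_le_rpow hu (by linarith) (by linarith)
    have h3 : v ^ (z - 1) ≤ (u + v) ^ (z - 1) :=
      Real.rpow_le_rpow hv (by linarith) (by linarith)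
    have h4 : u ^ (z - 1) * u = u ^ z := by
      rcases eq_or_lt_of_le hu with h' | h'
      · simp [← h', Real.zero_rpow (show z ≠ 0 by linarith)]
      · have := Real.rpow_add_one h'.ne' (z - 1)
        rw [sub_add_cancel] at this
        rw [← this]
    have h5 : v ^ (z - 1) * v = v ^ z := by
      rcases eq_or_lt_of_le hv with h' | h'
      · simp [← h', Real.zero_rpow (show z ≠ 0 by linarith)]
      · have := Real.rpow_add_one h'.ne' (z - 1)
        rw [sub_add_cancel] at this
        rw [← this]
    nlinarith [mul_le_mul_of_nonneg_right h2 hu, mul_le_mul_of_nonneg_right h3 hv]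

/-- Tangent line inequality at a positive point. -/
lemma aux_tangent {p x : ℝ} (hp : 2 ≤ p) (hx : 0 < x) (y : ℝ) :
    x ^ p + p * (x ^ (p - 2) * x) * (y - x) ≤ |y| ^ p := by
  have hX : x ^ (p - 2) * x = x ^ (p - 1) := by
    rw [show p - 1 = p - 2 + 1 by ring, Real.rpow_add_one hx.ne']
  have hXx : x ^ (p - 1) * x = x ^ p := by
    have := Real.rpow_add_one hx.ne' (p - 1)
    rw [sub_add_cancel] at this
    rw [← this]
  have hXpos : (0 : ℝ) < x ^ (p - 1) := Real.rpow_pos_of_pos hx _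
  have hPpos : (0 : ℝ) < x ^ p := Real.rpow_pos_of_pos hx _
  have hYnn : (0 : ℝ) ≤ |y| ^ p := Real.rpow_nonneg (abs_nonneg y) p
  rw [hX]
  rcases lt_or_ge y 0 with hy | hy
  · nlinarith [mul_pos hXpos (neg_pos.mpr hy)]
  · -- Bernoulli
    have hs : -1 ≤ y / x - 1 := by
      have : 0 ≤ y / x := div_nonneg hy hx.le
      linarith
    have hb := one_add_mul_self_le_rpow_one_add hs (by linarith : (1:ℝ) ≤ p)
    have h1 : (1 : ℝ) + (y / x - 1) = y / x := by ring
    rw [h1] at hb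
    have h2 : (y / x) ^ p = |y| ^ p / x ^ p := by
      rw [Real.div_rpow hy hx.le, abs_of_nonneg hy]
    rw [h2] at hb
    have hb' := mul_le_mul_of_nonneg_left hb hPpos.le
    have key : x ^ p * (1 + p * (y / x - 1)) = x ^ p + p * x ^ (p - 1) * (y - x) := by
      rw [← hXx]; field_simp
    have key2 : x ^ p * (|y| ^ p / x ^ p) = |y| ^ p := by
      field_simp
    rw [key, key2] at hb'
    linarith

/-- Tangent line inequality, general point. -/
lemma aux_tangent_all {p : ℝ} (hp : 2 ≤ p) (a b : ℝ) :
    p * ((if a = 0 then 0 else |a| ^ (p - 2) * a) * (b - a)) ≤ |b| ^ p - |a| ^ p := by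
  rcases eq_or_ne a 0 with rfl | ha
  · simp [Real.zero_rpow (by linarith : p ≠ 0), Real.rpow_nonneg (abs_nonneg b) p]
  rw [if_neg ha]
  rcases lt_or_gt_of_ne ha with hneg | hpos
  · have h := aux_tangent hp (x := -a) (by linarith) (-b)
    rw [abs_of_neg hneg]
    rw [abs_neg] at h
    have e1 : p * ((-a) ^ (p - 2) * -a) * (-b - -a)
        = p * ((-a) ^ (p - 2) * a * (b - a)) := by ring
    rw [e1] at h
    linarith
  · have h := aux_tangent hp hpos b
    rw [abs_of_pos hpos]
    linarith

/-- Clarkson-type inequality. -/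
lemma aux_clarkson {p : ℝ} (hp : 2 ≤ p) (a b : ℝ) :
    2 * |(a + b) / 2| ^ p + 2 ^ (1 - p) * |a - b| ^ p ≤ |a| ^ p + |b| ^ p := by
  set s := |(a + b) / 2| with hs
  set t := |(a - b) / 2| with ht
  have hsnn : 0 ≤ s := abs_nonneg _
  have htnn : 0 ≤ t := abs_nonneg _
  have hz : (1 : ℝ) ≤ p / 2 := by linarith
  -- step 1: s^p + t^p ≤ (s^2 + t^2)^(p/2)
  have e1 : ∀ u : ℝ, 0 ≤ u → (u ^ (2:ℝ)) ^ (p / 2) = u ^ p := by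
    intro u hu
    rw [← Real.rpow_mul hu]
    congr 1
    ring
  have h1 : s ^ p + t ^ p ≤ (s ^ (2:ℝ) + t ^ (2:ℝ)) ^ (p / 2) := by
    calc s ^ p + t ^ p = (s ^ (2:ℝ)) ^ (p/2) + (t ^ (2:ℝ)) ^ (p/2) := by
          rw [e1 s hsnn, e1 t htnn]
      _ ≤ (s ^ (2:ℝ) + t ^ (2:ℝ)) ^ (p/2) :=
          aux_superadd (Real.rpow_nonneg hsnn _) (Real.rpow_nonneg htnn _) hz
  -- step 2: s^2 + t^2 = (a^2+b^2)/2
  have h2 : s ^ (2:ℝ) + t ^ (2:ℝ) = (|a| ^ (2:ℝ) + |b| ^ (2:ℝ)) / 2 := by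
    rw [Real.rpow_two, Real.rpow_two, Real.rpow_two, Real.rpow_two]
    rw [hs, ht, sq_abs, sq_abs, sq_abs, sq_abs]
    ring
  -- step 3: convexity
  have h3 : ((|a| ^ (2:ℝ) + |b| ^ (2:ℝ)) / 2) ^ (p/2) ≤ (|a| ^ p + |b| ^ p) / 2 := by
    have hc := (convexOn_rpow hz).2 (x := |a| ^ (2:ℝ)) (y := |b| ^ (2:ℝ))
      (Set.mem_Ici.mpr (Real.rpow_nonneg (abs_nonneg a) (2:ℝ)))
      (Set.mem_Ici.mpr (Real.rpow_nonneg (abs_nonneg b) (2:ℝ)))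
      (by norm_num : (0:ℝ) ≤ 1/2) (by norm_num : (0:ℝ) ≤ 1/2) (by norm_num)
    simp only [smul_eq_mul] at hc
    calc ((|a| ^ (2:ℝ) + |b| ^ (2:ℝ)) / 2) ^ (p/2)
        = (1/2 * |a| ^ (2:ℝ) + 1/2 * |b| ^ (2:ℝ)) ^ (p/2) := by ring_nf
      _ ≤ 1/2 * (|a| ^ (2:ℝ)) ^ (p/2) + 1/2 * (|b| ^ (2:ℝ)) ^ (p/2) := hc
      _ = (|a| ^ p + |b| ^ p) / 2 := by rw [e1 _ (abs_nonneg a), e1 _ (abs_nonneg b)]; ring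
  -- combine
  have h4 : s ^ p + t ^ p ≤ (|a| ^ p + |b| ^ p) / 2 := by
    calc s ^ p + t ^ p ≤ (s ^ (2:ℝ) + t ^ (2:ℝ)) ^ (p/2) := h1
      _ = ((|a| ^ (2:ℝ) + |b| ^ (2:ℝ)) / 2) ^ (p/2) := by rw [h2]
      _ ≤ (|a| ^ p + |b| ^ p) / 2 := h3
  -- relate t^p with 2^(1-p) * |a-b|^p
  have h5 : 2 * t ^ p = 2 ^ (1 - p) * |a - b| ^ p := by
    have : t = |a - b| / 2 := by rw [ht, abs_div]; norm_num
    rw [this, Real.div_rpow (abs_nonneg _) (by norm_num : (0:ℝ) ≤ 2)]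
    rw [Real.rpow_sub (by norm_num : (0:ℝ) < 2), Real.rpow_one]
    ring
  linarith

/-- The elementary convexity inequality (Lindqvist): for `p ≥ 2` and all reals `a, b`,
`|b|^p − |a|^p ≥ p·|a|^{p−2}·a·(b − a) + 2^{1−p}·|a − b|^p`,
where `|a|^{p−2}·a` is interpreted as `0` when `a = 0`. -/
theorem stmt_4 (p a b : ℝ) (hp : 2 ≤ p) :
    p * ((if a = 0 then 0 else |a| ^ (p - 2) * a) * (b - a)) + 2 ^ (1 - p) * |a - b| ^ p ≤
      |b| ^ p - |a| ^ p := by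
  have hm := aux_tangent_all hp a ((a + b) / 2)
  have hc := aux_clarkson hp a b
  have e : (if a = 0 then (0:ℝ) else |a| ^ (p - 2) * a) * ((a + b) / 2 - a)
      = (if a = 0 then (0:ℝ) else |a| ^ (p - 2) * a) * (b - a) / 2 := by
    split <;> ring
  rw [e] at hm
  linarith
end

section
/- Let A, B > 0 be real constants, let p, q be real exponents with 1 < p < q, and let λ be a real number satisfying 0 < λ < (q−p)^{(q−p)/(q−1)} · (p−1)^{(p−1)/(q−1)} / (A^{(q−p)/(q−1)} · B^{(p−1)/(q−1)} · (q−1)). Define φ : (0, ∞) → ℝ by φ(r) = λ·(A + B·r^{q−1}) − r^{p−1}, and set r₀ = (λ·(q−1)·B / (p−1))^{1/(p−q)}. Then φ(r₀) < 0; in particular inf{φ(r) : r > 0} < 0. -/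
/-!
At the critical point `r₀` of `φ` one has `r₀ ^ (p - 1) = K r₀ ^ (q - 1)` with
`K = λ (q - 1) B / (p - 1)`, so `φ r₀ = λ / (p - 1) · (A (p - 1) - B (q - p) r₀ ^ (q - 1))`.
The smallness condition on `λ` is exactly `K < M ^ ((q - p) / (q - 1))` with
`M = B (q - p) / (A (p - 1))`, and since `K = r₀ ^ (p - q)` this says `M⁻¹ < r₀ ^ (q - 1)`,
i.e. the bracket is negative. The infimum is then below `φ r₀`, because `φ` is bounded below:
the lower power `r ^ (p - 1)` is dominated by `λ B r ^ (q - 1)` up to a constant.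
-/

open Set Filter

lemma Real.exists_rpow_le_mul_rpow_add {a b ε : ℝ} (ha : 0 < a) (hab : a < b) (hε : 0 < ε) :
    ∃ C, ∀ r, 0 ≤ r → r ^ a ≤ ε * r ^ b + C := by
  obtain ⟨R, hR⟩ := eventually_atTop.1
    ((tendsto_rpow_atTop (sub_pos.2 hab)).eventually_ge_atTop ε⁻¹)
  refine ⟨max R 0 ^ a, fun r hr => ?_⟩
  rcases le_total r (max R 0) with hrR | hRr
  · have hεrb : 0 ≤ ε * r ^ b := mul_nonneg hε.le (Real.rpow_nonneg hr _)
    linarith [Real.rpow_le_rpow hr hrR ha.le]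
  · have hlarge : ε⁻¹ ≤ r ^ (b - a) := hR r (le_of_max_le_left hRr)
    have hsplit : r ^ b = r ^ (b - a) * r ^ a := by
      rw [← Real.rpow_add' hr (by linarith)]; ring_nf
    calc r ^ a = ε * ε⁻¹ * r ^ a := by field_simp
      _ ≤ ε * r ^ b := by
        rw [hsplit, mul_assoc]
        gcongr
      _ ≤ ε * r ^ b + max R 0 ^ a := le_add_of_nonneg_right (by positivity)

lemma Real.inv_lt_rpow_of_rpow_neg_lt {r M s t : ℝ} (hr : 0 < r) (hs : 0 < s) (ht : 0 < t)
    (h : r ^ (-t) < M ^ (t / s)) : M⁻¹ < r ^ s := by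
  rcases le_or_gt M 0 with hM | hM
  · exact (inv_nonpos.2 hM).trans_lt (Real.rpow_pos_of_pos hr _)
  have hpow := Real.rpow_lt_rpow (Real.rpow_nonneg hr.le _) h (div_pos hs ht)
  rw [← Real.rpow_mul hr.le, ← Real.rpow_mul hM.le, neg_mul, mul_div_cancel₀ _ ht.ne',
    div_mul_div_cancel₀' ht.ne', div_self hs.ne', Real.rpow_one, Real.rpow_neg hr.le] at hpow
  exact inv_lt_of_inv_lt₀ (Real.rpow_pos_of_pos hr _) hpow

lemma lt_rpow_of_lt_threshold {lam A B p q : ℝ} (hA : 0 < A) (hB : 0 < B)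
    (hp : 1 < p) (hpq : p < q)
    (hlam : lam < (q - p) ^ ((q - p) / (q - 1)) * (p - 1) ^ ((p - 1) / (q - 1)) /
      (A ^ ((q - p) / (q - 1)) * B ^ ((p - 1) / (q - 1)) * (q - 1))) :
    lam * (q - 1) * B / (p - 1) < (B * (q - p) / (A * (p - 1))) ^ ((q - p) / (q - 1)) := by
  have hp1 : 0 < p - 1 := by linarith
  have hqp : 0 < q - p := by linarith
  have hq1 : 0 < q - 1 := by linarith
  have hα : (p - 1) / (q - 1) = 1 - (q - p) / (q - 1) := by field_simp; ring
  rw [hα, Real.rpow_sub hp1, Real.rpow_sub hB, Real.rpow_one, Real.rpow_one] at hlam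
  rw [Real.div_rpow (by positivity) (by positivity), Real.mul_rpow hB.le hqp.le,
    Real.mul_rpow hA.le hp1.le, div_lt_iff₀ hp1]
  set α := (q - p) / (q - 1)
  have hp1α : 0 < (p - 1) ^ α := by positivity
  have hBα : 0 < B ^ α := by positivity
  have hAα : 0 < A ^ α := by positivity
  calc lam * (q - 1) * B < (q - p) ^ α * ((p - 1) / (p - 1) ^ α) /
        (A ^ α * (B / B ^ α) * (q - 1)) * (q - 1) * B := by gcongr
    _ = _ := by field_simp

lemma critical_value_eq {lam A B p q r : ℝ} (hr : 0 < r) (hp : p - 1 ≠ 0)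
    (h : r ^ (p - q) = lam * (q - 1) * B / (p - 1)) :
    lam * (A + B * r ^ (q - 1)) - r ^ (p - 1) =
      lam / (p - 1) * (A * (p - 1) - B * (q - p) * r ^ (q - 1)) := by
  have hsplit : r ^ (p - 1) = r ^ (p - q) * r ^ (q - 1) := by
    rw [← Real.rpow_add hr]; ring_nf
  rw [hsplit, h]
  field_simp
  ring

lemma bddBelow_image_Ioi_of_eq_rpow {φ : ℝ → ℝ} {lam A B p q : ℝ} (hB : 0 < B) (hlam : 0 < lam)
    (hp : 1 < p) (hpq : p < q)
    (hφ : ∀ r > 0, φ r = lam * (A + B * r ^ (q - 1)) - r ^ (p - 1)) :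
    BddBelow (φ '' Ioi 0) := by
  obtain ⟨C, hC⟩ := Real.exists_rpow_le_mul_rpow_add (sub_pos.2 hp)
    (by linarith : p - 1 < q - 1) (mul_pos hlam hB)
  refine ⟨lam * A - C, ?_⟩
  rintro _ ⟨r, hr, rfl⟩
  have := hC r (le_of_lt hr)
  rw [hφ r hr]
  linarith

/-- Under the smallness condition on `λ`, the minimum value `φ(r₀)` of
`φ(r) = λ(A + B r^{q−1}) − r^{p−1}` is negative; in particular `inf{φ(r) : r > 0} < 0`. -/
theorem stmt_11 (lam A B p q : ℝ) (hA : 0 < A) (hB : 0 < B)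
    (hp : 1 < p) (hpq : p < q)
    (hlam : 0 < lam)
    (hlam' : lam < (q - p) ^ ((q - p) / (q - 1)) * (p - 1) ^ ((p - 1) / (q - 1)) /
      (A ^ ((q - p) / (q - 1)) * B ^ ((p - 1) / (q - 1)) * (q - 1)))
    (φ : ℝ → ℝ) (hφ : ∀ r > 0, φ r = lam * (A + B * r ^ (q - 1)) - r ^ (p - 1))
    (r₀ : ℝ) (hr₀ : r₀ = (lam * (q - 1) * B / (p - 1)) ^ (1 / (p - q))) :
    φ r₀ < 0 ∧ sInf (φ '' Ioi 0) < 0 := by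
  have hp1 : 0 < p - 1 := by linarith
  have hq1 : 0 < q - 1 := by linarith
  have hK : 0 < lam * (q - 1) * B / (p - 1) := by positivity
  have hr₀pos : 0 < r₀ := hr₀ ▸ Real.rpow_pos_of_pos hK _
  have hr₀K : r₀ ^ (p - q) = lam * (q - 1) * B / (p - 1) := by
    rw [hr₀, ← Real.rpow_mul hK.le, one_div, inv_mul_cancel₀ (by linarith), Real.rpow_one]
  have hr₀pow := hr₀K.trans_lt (lt_rpow_of_lt_threshold hA hB hp hpq hlam')
  rw [← neg_sub] at hr₀pow
  have hr₀large := Real.inv_lt_rpow_of_rpow_neg_lt hr₀pos hq1 (sub_pos.2 hpq) hr₀pow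
  rw [inv_div, div_lt_iff₀ (mul_pos hB (sub_pos.2 hpq))] at hr₀large
  have hφr₀ : φ r₀ < 0 := by
    rw [hφ r₀ hr₀pos, critical_value_eq hr₀pos hp1.ne' hr₀K]
    exact mul_neg_of_pos_of_neg (div_pos hlam hp1) (by linarith)
  exact ⟨hφr₀, (csInf_le (bddBelow_image_Ioi_of_eq_rpow hB hlam hp hpq hφ)
    ⟨r₀, hr₀pos, rfl⟩).trans_lt hφr₀⟩
end
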